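/- arXiv:0707.2985 — 2 statements merged into one kernel-verified Lean document; each statement's English description precedes it below -/
import Mathlib

section
/- Let η, ξ ∈ c₀* with all terms positive, and suppose r(η_a) = η_{a²}/η_a is equivalent to a monotone sequence (there exist a nondecreasing positive φ and β > 0 with φ ≤ r(η_a) ≤ βφ). If ξ_a/η_a is unbounded, then ξ_{a²}/η_{a²} is unbounded. Equivalently, if ξ_{a²} = O(η_{a²}) then ξ_a = O(η_a). -/
open Finset Filter Real

/-- First-order arithmetic mean: (ξ_a)_n = (1/n) ∑_{j=1}^n ξ_j. -/
noncomputable def am (ξ : ℕ → ℝ) (n : ℕ) : ℝ := (∑ j ∈ Finset.Icc 1 n, ξ j) / n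

/-- Second-order arithmetic mean. -/
noncomputable def am2 (ξ : ℕ → ℝ) : ℕ → ℝ := am (am ξ)

/-- Harmonic numbers H_n = ∑_{j=1}^n 1/j. -/
noncomputable def harm (n : ℕ) : ℝ := ∑ j ∈ Finset.Icc 1 n, (1 : ℝ) / j

/-!
Write `S m = m · (η_{a²})_m = ∑_{j ≤ m} (η_a)_j`. The lower bound `φ ≤ r(η_a)` says that each new
term `(η_a)_m` is at most `S m / (m φ m)`, so `S` grows by at most a factor `exp (2 / (m φ n))` at
step `m > n`; hence `S N ≤ S n · exp (2 (H_N - H_n) / φ n)` with `H` the harmonic numbers. Choose `N`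
with `H_N - H_n ≈ φ n`. Since `j (ξ_a)_j` is nondecreasing, `N (ξ_{a²})_N ≥ n (ξ_a)_n (H_N - H_n)`,
and the upper bound `r(η_a) ≤ β φ` gives `S n ≤ β n φ n (η_a)_n`. Comparing through
`ξ_{a²} ≤ C η_{a²}` at `N` and dividing by `n φ n` bounds `(ξ_a)_n / (η_a)_n` by
`C β exp (2 + 2 / φ 1)`.
-/

lemma natCast_mul_am (ζ : ℕ → ℝ) (n : ℕ) : n * am ζ n = ∑ j ∈ Icc 1 n, ζ j := by
  rcases Nat.eq_zero_or_pos n with rfl | hn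
  · simp
  · exact mul_div_cancel₀ _ (by positivity)

lemma am_pos {ζ : ℕ → ℝ} (hζ : ∀ n, 1 ≤ n → 0 < ζ n) {n : ℕ} (hn : 1 ≤ n) : 0 < am ζ n :=
  div_pos (sum_pos (fun j hj => hζ j (mem_Icc.1 hj).1) ⟨1, mem_Icc.2 ⟨le_rfl, hn⟩⟩)
    (by exact_mod_cast hn)

lemma natCast_mul_am_le_natCast_mul_am {ζ : ℕ → ℝ} (hζ : ∀ n, 1 ≤ n → 0 ≤ ζ n) {m n : ℕ}
    (hmn : m ≤ n) : m * am ζ m ≤ n * am ζ n := by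
  rw [natCast_mul_am, natCast_mul_am]
  exact sum_le_sum_of_subset_of_nonneg (Icc_subset_Icc_right hmn)
    fun j hj _ => hζ j (mem_Icc.1 hj).1

lemma le_am_of_antitoneOn {ζ : ℕ → ℝ} (hζ : AntitoneOn ζ (Set.Ici 1)) {n : ℕ} (hn : 1 ≤ n) :
    ζ n ≤ am ζ n := by
  have hn' : (0 : ℝ) < n := by exact_mod_cast hn
  rw [← mul_le_mul_iff_of_pos_left hn', natCast_mul_am]
  calc (n : ℝ) * ζ n = ∑ _j ∈ Icc 1 n, ζ n := by simp
    _ ≤ ∑ j ∈ Icc 1 n, ζ j := sum_le_sum fun j hj =>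
      hζ (mem_Icc.1 hj).1 (show 1 ≤ n from hn) (mem_Icc.1 hj).2

lemma antitoneOn_am {ζ : ℕ → ℝ} (hζ : AntitoneOn ζ (Set.Ici 1)) : AntitoneOn (am ζ) (Set.Ici 1) := by
  refine antitoneOn_nat_Ici_of_succ_le fun n hn => ?_
  have hsucc : ζ (n + 1) ≤ am ζ n := by
    calc ζ (n + 1) ≤ ζ n := hζ hn (show 1 ≤ n + 1 by omega) n.le_succ
      _ ≤ am ζ n := le_am_of_antitoneOn hζ hn
  have hsum : ((n : ℝ) + 1) * am ζ (n + 1) = n * am ζ n + ζ (n + 1) := by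
    rw [← Nat.cast_succ, natCast_mul_am, natCast_mul_am, sum_Icc_succ_top (by omega)]
  have hn' : (0 : ℝ) < n + 1 := by positivity
  nlinarith

lemma harm_succ (n : ℕ) : harm (n + 1) = harm n + 1 / (n + 1) := by
  rw [harm, harm, sum_Icc_succ_top (by omega)]
  push_cast
  ring

lemma harm_sub_harm {m n : ℕ} (hmn : m ≤ n) : harm n - harm m = ∑ j ∈ Ioc m n, (1 : ℝ) / j := by
  have hIoc (k : ℕ) : harm k = ∑ j ∈ Ioc 0 k, (1 : ℝ) / j := by
    rw [harm, ← Icc_add_one_left_eq_Ioc]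
    rfl
  rw [hIoc, hIoc, ← sum_Ioc_consecutive _ m.zero_le hmn, add_sub_cancel_left]

lemma tendsto_harm_atTop : Tendsto harm atTop atTop := by
  refine tendsto_sum_range_one_div_nat_succ_atTop.congr fun n => ?_
  induction n with
  | zero => simp [harm]
  | succ m ih => rw [harm_succ, sum_range_succ, ih]

lemma exists_harm_sub_mem_Icc {x : ℝ} (hx : 0 < x) (n : ℕ) :
    ∃ N, n ≤ N ∧ x ≤ harm N - harm n ∧ harm N - harm n ≤ x + 1 := by
  have hex : ∃ N, n ≤ N ∧ harm n + x ≤ harm N :=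
    ((tendsto_harm_atTop.eventually_ge_atTop _).and (eventually_ge_atTop n)).exists.imp
      fun _ h => h.symm
  obtain ⟨hnN, hN⟩ := Nat.find_spec hex
  obtain ⟨M, hM⟩ : ∃ M, Nat.find hex = M + 1 ∧ n ≤ M := by
    rcases hnN.eq_or_lt with h | h
    · rw [← h] at hN; linarith
    · exact ⟨Nat.find hex - 1, by omega, by omega⟩
  have hMlt : harm M < harm n + x := by
    by_contra! h
    exact Nat.find_min hex (by omega) ⟨hM.2, h⟩
  refine ⟨Nat.find hex, hnN, by linarith, ?_⟩
  have hstep : 1 / ((M : ℝ) + 1) ≤ 1 := div_le_one_of_le₀ (by linarith [M.cast_nonneg (α := ℝ)])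
    (by positivity)
  rw [hM.1, harm_succ]
  linarith

lemma natCast_mul_am_mul_harm_sub_le {ζ : ℕ → ℝ} (hζ : ∀ n, 1 ≤ n → 0 ≤ ζ n) {n N : ℕ}
    (hnN : n ≤ N) : n * am ζ n * (harm N - harm n) ≤ N * am2 ζ N := by
  have ham (j : ℕ) : 0 ≤ am ζ j :=
    div_nonneg (sum_nonneg fun k hk => hζ k (mem_Icc.1 hk).1) j.cast_nonneg
  rw [harm_sub_harm hnN, mul_sum]
  calc ∑ j ∈ Ioc n N, n * am ζ n * (1 / (j : ℝ))
      ≤ ∑ j ∈ Ioc n N, am ζ j := sum_le_sum fun j hj => by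
        have hj0 : (0 : ℝ) < j := by exact_mod_cast (Nat.zero_le n).trans_lt (mem_Ioc.1 hj).1
        rw [mul_one_div, div_le_iff₀ hj0, mul_comm (am ζ j)]
        exact natCast_mul_am_le_natCast_mul_am hζ (mem_Ioc.1 hj).1.le
    _ ≤ ∑ j ∈ Icc 1 N, am ζ j := sum_le_sum_of_subset_of_nonneg
        (fun j hj => mem_Icc.2 ⟨by have := (mem_Ioc.1 hj).1; omega, (mem_Ioc.1 hj).2⟩)
        fun j _ _ => ham j
    _ = N * am2 ζ N := (natCast_mul_am _ N).symm

lemma add_le_mul_exp_two_mul {S a t : ℝ} (ha : 0 ≤ a) (haS : a ≤ S) (ht : 0 ≤ t)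
    (hat : a ≤ (S + a) * t) : S + a ≤ S * exp (2 * t) := by
  have hS : 0 ≤ S := ha.trans haS
  calc S + a ≤ S * (2 * t + 1) := by nlinarith
    _ ≤ S * exp (2 * t) := mul_le_mul_of_nonneg_left (add_one_le_exp _) hS

lemma natCast_mul_am_le_mul_exp {a : ℕ → ℝ} {c : ℝ} {n N : ℕ} (hc : 0 < c) (hn : 1 ≤ n)
    (hnN : n ≤ N) (ha : ∀ m, n < m → 0 ≤ a m) (ha_le : ∀ m, n < m → a m ≤ am a m)
    (hca_le : ∀ m, n < m → c * a m ≤ am a m) :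
    N * am a N ≤ n * am a n * exp (2 * (harm N - harm n) / c) := by
  induction N, hnN using Nat.le_induction with
  | base => simp
  | succ m hnm ih =>
    push_cast
    have hm1 : (1 : ℝ) ≤ m := by exact_mod_cast hn.trans hnm
    have ham := ha (m + 1) (by omega)
    have hmean := ha_le (m + 1) (by omega)
    have hc_mean := hca_le (m + 1) (by omega)
    have hsum : ((m : ℝ) + 1) * am a (m + 1) = m * am a m + a (m + 1) := by
      rw [← Nat.cast_succ, natCast_mul_am, natCast_mul_am, sum_Icc_succ_top (by omega)]
    have hstep : ((m : ℝ) + 1) * am a (m + 1) ≤ m * am a m * exp (2 * (1 / (c * (m + 1)))) := by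
      rw [hsum]
      refine add_le_mul_exp_two_mul ham (by nlinarith) (by positivity) ?_
      rw [← hsum, mul_one_div, le_div_iff₀ (by positivity)]
      nlinarith
    calc ((m : ℝ) + 1) * am a (m + 1) ≤ m * am a m * exp (2 * (1 / (c * (m + 1)))) := hstep
      _ ≤ n * am a n * exp (2 * (harm m - harm n) / c) * exp (2 * (1 / (c * (m + 1)))) :=
        mul_le_mul_of_nonneg_right ih (exp_pos _).le
      _ = n * am a n * exp (2 * (harm (m + 1) - harm n) / c) := by
        rw [mul_assoc, ← exp_add, harm_succ]
        congr 2
        field_simp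
        ring

lemma natCast_mul_am2_le_mul_exp {η φ : ℕ → ℝ} (hη : AntitoneOn η (Set.Ici 1))
    (hηpos : ∀ n, 1 ≤ n → 0 < η n) (hφ : MonotoneOn φ (Set.Ici 1)) (hφpos : ∀ n, 1 ≤ n → 0 < φ n)
    (hratio : ∀ n, 1 ≤ n → φ n ≤ am2 η n / am η n) {n N : ℕ} (hn : 1 ≤ n) (hnN : n ≤ N) :
    N * am2 η N ≤ n * am2 η n * exp (2 * (harm N - harm n) / φ n) := by
  have hηa_pos (m : ℕ) (hm : 1 ≤ m) : 0 < am η m := am_pos hηpos hm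
  refine natCast_mul_am_le_mul_exp (hφpos n hn) hn hnN (fun m hm => (hηa_pos m (by omega)).le)
    (fun m hm => le_am_of_antitoneOn (antitoneOn_am hη) (by omega)) fun m hm => ?_
  calc φ n * am η m ≤ φ m * am η m := by
        gcongr; exacts [(hηa_pos m (by omega)).le, hφ hn (show 1 ≤ m by omega) hm.le]
    _ ≤ am2 η m := (le_div_iff₀ (hηa_pos m (by omega))).1 (hratio m (by omega))

theorem stmt_18_general (η ξ φ : ℕ → ℝ)
    (hηmono : ∀ n : ℕ, 1 ≤ n → η (n + 1) ≤ η n)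
    (hηpos : ∀ n : ℕ, 1 ≤ n → 0 < η n)
    (hξpos : ∀ n : ℕ, 1 ≤ n → 0 < ξ n)
    (hφmono : ∀ n : ℕ, 1 ≤ n → φ n ≤ φ (n + 1))
    (hφpos : ∀ n : ℕ, 1 ≤ n → 0 < φ n)
    (β : ℝ)
    (hequiv : ∀ n : ℕ, 1 ≤ n → φ n ≤ am2 η n / am η n ∧ am2 η n / am η n ≤ β * φ n) :
    (¬ ∃ C : ℝ, ∀ n : ℕ, 1 ≤ n → am ξ n ≤ C * am η n) →
      (¬ ∃ C : ℝ, ∀ n : ℕ, 1 ≤ n → am2 ξ n ≤ C * am2 η n) := by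
  rintro hunbounded ⟨C, hC⟩
  apply hunbounded
  have hηa_pos (n : ℕ) (hn : 1 ≤ n) : 0 < am η n := am_pos hηpos hn
  have hξa_pos (n : ℕ) (hn : 1 ≤ n) : 0 < am ξ n := am_pos hξpos hn
  have hφ : MonotoneOn φ (Set.Ici 1) := monotoneOn_nat_Ici_of_le_succ hφmono
  have hC0 : 0 ≤ C := by
    have := (am_pos hξa_pos le_rfl).trans_le (hC 1 le_rfl)
    exact (pos_of_mul_pos_left this (am_pos hηa_pos le_rfl).le).le
  refine ⟨C * β * exp (2 + 2 / φ 1), fun n hn => ?_⟩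
  have hφn := hφpos n hn
  obtain ⟨N, hnN, hφN, hN⟩ := exists_harm_sub_mem_Icc hφn n
  have hexp : 2 * (harm N - harm n) / φ n ≤ 2 + 2 / φ 1 := by
    calc 2 * (harm N - harm n) / φ n ≤ 2 * (φ n + 1) / φ n := by gcongr
      _ = 2 + 2 / φ n := by field_simp
      _ ≤ 2 + 2 / φ 1 := by
          gcongr
          exacts [hφpos 1 le_rfl, hφ (Set.mem_Ici.2 le_rfl) (show 1 ≤ n from hn) hn]
  have hgrowth := natCast_mul_am2_le_mul_exp (antitoneOn_nat_Ici_of_succ_le hηmono) hηpos hφ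
    hφpos (fun m hm => (hequiv m hm).1) hn hnN
  have hupper : am2 η n ≤ β * φ n * am η n := (div_le_iff₀ (hηa_pos n hn)).1 (hequiv n hn).2
  have hkey : n * φ n * am ξ n ≤ n * φ n * (C * β * exp (2 + 2 / φ 1) * am η n) := by
    calc n * φ n * am ξ n ≤ n * am ξ n * (harm N - harm n) := by
          rw [mul_right_comm]; gcongr; exact mul_nonneg n.cast_nonneg (hξa_pos n hn).le
      _ ≤ N * am2 ξ N := natCast_mul_am_mul_harm_sub_le (fun m hm => (hξpos m hm).le) hnN
      _ ≤ C * (N * am2 η N) := by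
          rw [mul_left_comm]; gcongr; exact hC N (by omega)
      _ ≤ C * (n * am2 η n * exp (2 * (harm N - harm n) / φ n)) := by gcongr
      _ ≤ C * (n * am2 η n * exp (2 + 2 / φ 1)) := by
          gcongr; exact mul_nonneg n.cast_nonneg (am_pos hηa_pos hn).le
      _ ≤ C * (n * (β * φ n * am η n) * exp (2 + 2 / φ 1)) := by gcongr
      _ = n * φ n * (C * β * exp (2 + 2 / φ 1) * am η n) := by ring
  exact le_of_mul_le_mul_left hkey (by positivity)

theorem stmt_18 (η ξ φ : ℕ → ℝ)
    (hηmono : ∀ n : ℕ, 1 ≤ n → η (n + 1) ≤ η n)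
    (hηpos : ∀ n : ℕ, 1 ≤ n → 0 < η n)
    (hηlim : Tendsto η atTop (nhds 0))
    (hξmono : ∀ n : ℕ, 1 ≤ n → ξ (n + 1) ≤ ξ n)
    (hξpos : ∀ n : ℕ, 1 ≤ n → 0 < ξ n)
    (hξlim : Tendsto ξ atTop (nhds 0))
    (hφmono : ∀ n : ℕ, 1 ≤ n → φ n ≤ φ (n + 1))
    (hφpos : ∀ n : ℕ, 1 ≤ n → 0 < φ n)
    (β : ℝ) (hβ : 0 < β)
    (hequiv : ∀ n : ℕ, 1 ≤ n → φ n ≤ am2 η n / am η n ∧ am2 η n / am η n ≤ β * φ n) :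
    (¬ ∃ C : ℝ, ∀ n : ℕ, 1 ≤ n → am ξ n ≤ C * am η n) →
      (¬ ∃ C : ℝ, ∀ n : ℕ, 1 ≤ n → am2 ξ n ≤ C * am2 η n) :=
  stmt_18_general η ξ φ hηmono hηpos hξpos hφmono hφpos β hequiv
end

section
/- Let η, ξ ∈ c₀* with positive terms, and suppose there exist α, β > 0 with α·log n ≤ (η_{a²})_n/(η_a)_n ≤ β·log n for all n ≥ 2. If (η_{a²})_n ≤ (ξ_{a²})_n for all n, then there exists K > 0 with (η_a)_n ≤ K·(ξ_a)_n for all n, i.e., η_a = O(ξ_a). -/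
/-! For `n ≥ 2` the hypotheses chain to
`α log n (η_a)_n ≤ (η_{a²})_n ≤ (ξ_{a²})_n ≤ H_n (ξ_a)_n ≤ (1 + log n) (ξ_a)_n`,
and `(1 + log n) / log n` is bounded for `n ≥ 2`; the case `n = 1` only enlarges the constant. -/

open Finset Filter Real

lemma am_nonneg {ξ : ℕ → ℝ} (hξ : ∀ j, 1 ≤ j → 0 ≤ ξ j) (n : ℕ) : 0 ≤ am ξ n :=
  div_nonneg (sum_nonneg fun j hj => hξ j (mem_Icc.mp hj).1) n.cast_nonneg

lemma am_pos_s19 {ξ : ℕ → ℝ} (hξ : ∀ j, 1 ≤ j → 0 < ξ j) {n : ℕ} (hn : 1 ≤ n) : 0 < am ξ n :=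
  div_pos (sum_pos (fun j hj => hξ j (mem_Icc.mp hj).1) ⟨1, mem_Icc.mpr ⟨le_rfl, hn⟩⟩)
    (by exact_mod_cast hn)

/-- Each `(ξ_a)_k` with `k ≤ n` is at most `(1/k) ∑_{j ≤ n} ξ_j`; summing over `k` gives `H_n`. -/
lemma am2_le_harmonic_mul_am {ξ : ℕ → ℝ} (hξ : ∀ j, 1 ≤ j → 0 ≤ ξ j) (n : ℕ) :
    am2 ξ n ≤ harmonic n * am ξ n := by
  set S := ∑ j ∈ Icc 1 n, ξ j
  have hterm : ∀ k ∈ Icc 1 n, am ξ k ≤ S * (k : ℝ)⁻¹ := fun k hk => by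
    rw [am, div_eq_mul_inv]
    gcongr
    exact sum_le_sum_of_subset_of_nonneg (Icc_subset_Icc_right (mem_Icc.mp hk).2)
      fun j hj _ => hξ j (mem_Icc.mp hj).1
  calc am2 ξ n = (∑ k ∈ Icc 1 n, am ξ k) / n := rfl
    _ ≤ (∑ k ∈ Icc 1 n, S * (k : ℝ)⁻¹) / n := by gcongr with k hk; exact hterm k hk
    _ = harmonic n * am ξ n := by
      rw [← mul_sum, am, harmonic_eq_sum_Icc]
      push_cast
      ring

lemma am2_le_one_add_log_mul_am {ξ : ℕ → ℝ} (hξ : ∀ j, 1 ≤ j → 0 ≤ ξ j) (n : ℕ) :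
    am2 ξ n ≤ (1 + log n) * am ξ n :=
  (am2_le_harmonic_mul_am hξ n).trans <|
    mul_le_mul_of_nonneg_right (harmonic_le_one_add_log n) (am_nonneg hξ n)

/-- `(1 + log n) / log n` is decreasing, so its value at `n = 2` bounds it for all `n ≥ 2`. -/
lemma le_mul_of_log_mul_le_one_add_log_mul {a b α : ℝ} {n : ℕ} (hn : 2 ≤ n) (hα : 0 < α)
    (hb : 0 ≤ b) (h : α * log n * a ≤ (1 + log n) * b) :
    a ≤ (1 + 1 / log 2) / α * b := by
  have hlog2 : 0 < log 2 := log_pos one_lt_two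
  have hlog2n : log 2 ≤ log n := log_le_log two_pos (by exact_mod_cast hn)
  have hlogn : 0 < log n := hlog2.trans_le hlog2n
  calc a ≤ (1 + log n) / (α * log n) * b := by
        rw [div_mul_eq_mul_div, le_div_iff₀ (by positivity)]
        linarith
    _ = (1 + 1 / log n) / α * b := by field_simp; ring
    _ ≤ (1 + 1 / log 2) / α * b := by gcongr

theorem stmt_19_general (η ξ : ℕ → ℝ)
    (hηpos : ∀ n : ℕ, 1 ≤ n → 0 < η n)
    (hξpos : ∀ n : ℕ, 1 ≤ n → 0 < ξ n)
    (α β : ℝ) (hα : 0 < α)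
    (hlog : ∀ n : ℕ, 2 ≤ n →
      α * Real.log n ≤ am2 η n / am η n ∧ am2 η n / am η n ≤ β * Real.log n)
    (hle : ∀ n : ℕ, 1 ≤ n → am2 η n ≤ am2 ξ n) :
    ∃ K : ℝ, 0 < K ∧ ∀ n : ℕ, 1 ≤ n → am η n ≤ K * am ξ n := by
  have hξ1 := am_pos_s19 hξpos le_rfl
  refine ⟨max ((1 + 1 / log 2) / α) (am η 1 / am ξ 1), ?_, fun n hn => ?_⟩
  · exact lt_max_of_lt_left (by have := log_pos one_lt_two; positivity)
  obtain rfl | hn2 := hn.eq_or_lt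
  · calc am η 1 = am η 1 / am ξ 1 * am ξ 1 := (div_mul_cancel₀ _ hξ1.ne').symm
      _ ≤ _ := by gcongr; exact le_max_right _ _
  have hξn := am_pos_s19 hξpos hn
  have hlower : α * log n * am η n ≤ am2 η n := (le_div_iff₀ (am_pos_s19 hηpos hn)).mp (hlog n hn2).1
  have hchain : α * log n * am η n ≤ (1 + log n) * am ξ n :=
    hlower.trans <| (hle n hn).trans <| am2_le_one_add_log_mul_am (fun j hj => (hξpos j hj).le) n
  exact (le_mul_of_log_mul_le_one_add_log_mul hn2 hα hξn.le hchain).trans <| by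
    gcongr; exact le_max_left _ _

theorem stmt_19 (η ξ : ℕ → ℝ)
    (hηmono : ∀ n : ℕ, 1 ≤ n → η (n + 1) ≤ η n)
    (hηpos : ∀ n : ℕ, 1 ≤ n → 0 < η n)
    (hηlim : Tendsto η atTop (nhds 0))
    (hξmono : ∀ n : ℕ, 1 ≤ n → ξ (n + 1) ≤ ξ n)
    (hξpos : ∀ n : ℕ, 1 ≤ n → 0 < ξ n)
    (hξlim : Tendsto ξ atTop (nhds 0))
    (α β : ℝ) (hα : 0 < α) (hβ : 0 < β)
    (hlog : ∀ n : ℕ, 2 ≤ n →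
      α * Real.log n ≤ am2 η n / am η n ∧ am2 η n / am η n ≤ β * Real.log n)
    (hle : ∀ n : ℕ, 1 ≤ n → am2 η n ≤ am2 ξ n) :
    ∃ K : ℝ, 0 < K ∧ ∀ n : ℕ, 1 ≤ n → am η n ≤ K * am ξ n :=
  stmt_19_general η ξ hηpos hξpos α β hα hlog hle
end
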